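/- The Kullback–Leibler divergence of μ^{2,0} with respect to UNIF equals 7/3 − log 6; equivalently, ∫₀^{2π} (1−(4/3)·cos θ+(1/3)·cos 2θ)·log(1−(4/3)·cos θ+(1/3)·cos 2θ) dθ/(2π) = 7/3 − log 6. -/

import Mathlib

open MeasureTheory Complex Filter Topology intervalIntegral
open scoped ENNReal Real

noncomputable section

/-- Normalized arclength (uniform) probability measure on the unit circle 𝕋 ⊆ ℂ. -/
def UNIF : Measure ℂ :=
  (ENNReal.ofReal (2 * Real.pi))⁻¹ •
    (volume.restrict (Set.Ico (0 : ℝ) (2 * Real.pi))).map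
      (fun θ : ℝ => Complex.exp (θ * Complex.I))

open Classical in
/-- Kullback–Leibler divergence 𝒦(ν|μ) ∈ [0,∞]. -/
def KL (ν μ : Measure ℂ) : ℝ≥0∞ :=
  if ν ≪ μ ∧ Integrable (fun z => Real.log ((ν.rnDeriv μ) z).toReal) ν then
    ENNReal.ofReal (∫ z, Real.log ((ν.rnDeriv μ) z).toReal ∂ν)
  else ⊤

/-- Measure with density `1 − g cos θ` with respect to UNIF (z = e^{iθ}). -/
def mu10 (g : ℝ) : Measure ℂ :=
  UNIF.withDensity fun z => ENNReal.ofReal (1 - g * Real.cos z.arg)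

/-- Measure with density `1 − g cos 2θ` with respect to UNIF (z = e^{iθ}). -/
def mu11 (g : ℝ) : Measure ℂ :=
  UNIF.withDensity fun z => ENNReal.ofReal (1 - g * Real.cos (2 * z.arg))

/-- Measure with density `1 − (4g/3) cos θ + (g/3) cos 2θ` with respect to UNIF (z = e^{iθ}). -/
def mu20 (g : ℝ) : Measure ℂ :=
  UNIF.withDensity fun z =>
    ENNReal.ofReal (1 - (4 * g / 3) * Real.cos z.arg + (g / 3) * Real.cos (2 * z.arg))

/-!
Substituting `θ = 2x` turns the density `1 - (4/3) cos θ + (1/3) cos 2θ` into `(8/3) sin⁴ x`, so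
the entropy integral reduces to `∫₀^π sin⁴ x` and `I₄`, where `I_n = ∫₀^π sinⁿ x log (sin x)`.
Differentiating `cos x sin^(n+1) x log (sin x)` gives the reduction formula
`(n + 2) I_{n+2} = (n + 1) I_n + ∫₀^π sinⁿ - ∫₀^π sin^(n+2)`, which computes `I₄` from
`I₀ = -π log 2`. On the measure side, the Radon–Nikodym derivative of `UNIF.withDensity ρ` is `ρ`,
so the divergence is `∫ ρ log ρ dUNIF`, the average over `[0, 2π)` of a `2π`-periodic function of
the angle.
-/

theorem hasDerivAt_cos_mul_sin_pow_mul_log_sin (n : ℕ) {x : ℝ} (hx : Real.sin x ≠ 0) :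
    HasDerivAt (fun x => Real.cos x * Real.sin x ^ (n + 1) * Real.log (Real.sin x))
      ((n + 1) * (Real.sin x ^ n * Real.log (Real.sin x)) + Real.sin x ^ n
        - (n + 2) * (Real.sin x ^ (n + 2) * Real.log (Real.sin x)) - Real.sin x ^ (n + 2)) x := by
  refine (((Real.hasDerivAt_cos x).fun_mul ((Real.hasDerivAt_sin x).fun_pow (n + 1))).fun_mul
    ((Real.hasDerivAt_sin x).log hx)).congr_deriv ?_
  field_simp
  push_cast
  linear_combination
    ((n + 1) * Real.log (Real.sin x) + 1) * Real.sin x ^ n * Real.sin x * Real.sin_sq_add_cos_sq x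

theorem intervalIntegrable_sin_pow_mul_log_sin (n : ℕ) {a b : ℝ} :
    IntervalIntegrable (fun x => Real.sin x ^ n * Real.log (Real.sin x)) volume a b :=
  intervalIntegrable_log_sin.continuousOn_mul (by fun_prop)

theorem integral_sin_pow_mul_log_sin_reduction (n : ℕ) :
    (n + 2) * ∫ x in 0..π, Real.sin x ^ (n + 2) * Real.log (Real.sin x) =
      (n + 1) * (∫ x in 0..π, Real.sin x ^ n * Real.log (Real.sin x)) +
        (∫ x in 0..π, Real.sin x ^ n) - ∫ x in 0..π, Real.sin x ^ (n + 2) := by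
  have hcont : ContinuousOn
      (fun x => Real.cos x * Real.sin x ^ (n + 1) * Real.log (Real.sin x)) (Set.Icc 0 π) := by
    have h : Continuous fun x =>
        Real.cos x * Real.sin x ^ n * (Real.sin x * Real.log (Real.sin x)) := by
      fun_prop (disch := exact Real.continuous_mul_log.comp Real.continuous_sin)
    convert h.continuousOn using 2 with x
    ring
  have hderiv := fun x (hx : x ∈ Set.Ioo 0 π) => (hasDerivAt_cos_mul_sin_pow_mul_log_sin n
    (Real.sin_pos_of_pos_of_lt_pi hx.1 hx.2).ne').hasDerivWithinAt (s := Set.Ioi x)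
  have hI n := intervalIntegrable_sin_pow_mul_log_sin n (a := 0) (b := π)
  have hW (n : ℕ) : IntervalIntegrable (fun x => Real.sin x ^ n) volume 0 π :=
    (by fun_prop : Continuous fun x => Real.sin x ^ n).intervalIntegrable 0 π
  have hftc := integral_eq_sub_of_hasDeriv_right_of_le Real.pi_pos.le hcont hderiv
    ((((hI n).const_mul _).add (hW n)).sub ((hI (n + 2)).const_mul _) |>.sub (hW (n + 2)))
  rw [integral_sub ((((hI n).const_mul _).add (hW n)).sub ((hI (n + 2)).const_mul _)) (hW _),
    integral_sub (((hI n).const_mul _).add (hW n)) ((hI (n + 2)).const_mul _),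
    integral_add ((hI n).const_mul _) (hW n), intervalIntegral.integral_const_mul,
    intervalIntegral.integral_const_mul] at hftc
  simp only [Real.sin_zero, Real.sin_pi, ne_eq, add_eq_zero, one_ne_zero, and_false,
    not_false_eq_true, zero_pow, mul_zero, zero_mul, sub_zero] at hftc
  linarith

theorem integral_sin_pow_four : ∫ x in 0..π, Real.sin x ^ 4 = 3 * π / 8 := by
  rw [integral_sin_pow 2, integral_sin_sq]
  norm_num
  ring

theorem integral_sin_pow_four_mul_log_sin :
    ∫ x in 0..π, Real.sin x ^ 4 * Real.log (Real.sin x) = π * (7 / 32 - 3 / 8 * Real.log 2) := by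
  have h0 := integral_sin_pow_mul_log_sin_reduction 0
  have h2 := integral_sin_pow_mul_log_sin_reduction 2
  norm_num [integral_log_sin_zero_pi, integral_sin_pow_four] at h0 h2
  linarith

def density20 (θ : ℝ) : ℝ := 1 - (4 / 3) * Real.cos θ + (1 / 3) * Real.cos (2 * θ)

theorem continuous_density20 : Continuous density20 := by
  unfold density20; fun_prop

theorem density20_periodic : Function.Periodic density20 (2 * π) := by
  intro θ
  rw [density20, density20, mul_add, Real.cos_add_two_pi,
    show 2 * (2 * π) = (2 : ℕ) * (2 * π) by norm_num, Real.cos_add_nat_mul_two_pi]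

theorem density20_two_mul (x : ℝ) : density20 (2 * x) = 8 / 3 * Real.sin x ^ 4 := by
  rw [density20, Real.cos_two_mul (2 * x), Real.cos_two_mul x,
    show Real.sin x ^ 4 = (Real.sin x ^ 2) ^ 2 by ring, Real.sin_sq]
  ring

theorem density20_nonneg (θ : ℝ) : 0 ≤ density20 θ := by
  rw [← mul_div_cancel₀ θ two_ne_zero, density20_two_mul]
  positivity

theorem density20_two_mul_mul_log (x : ℝ) :
    density20 (2 * x) * Real.log (density20 (2 * x)) =
      8 / 3 * Real.log (8 / 3) * Real.sin x ^ 4 +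
        32 / 3 * (Real.sin x ^ 4 * Real.log (Real.sin x)) := by
  rw [density20_two_mul]
  rcases eq_or_ne (Real.sin x) 0 with hx | hx
  · simp [hx]
  · rw [Real.log_mul (by norm_num) (by positivity), Real.log_pow]
    push_cast
    ring

theorem integral_density20_mul_log :
    ∫ θ in 0..2 * π, density20 θ * Real.log (density20 θ) = 2 * π * (7 / 3 - Real.log 6) := by
  have h := intervalIntegral.integral_comp_mul_left (a := 0) (b := π)
    (fun θ => density20 θ * Real.log (density20 θ)) two_ne_zero
  simp only [density20_two_mul_mul_log, mul_zero] at h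
  rw [intervalIntegral.integral_add
      (((by fun_prop : Continuous fun x => Real.sin x ^ 4).intervalIntegrable 0 π).const_mul _)
      ((intervalIntegrable_sin_pow_mul_log_sin 4).const_mul _),
    intervalIntegral.integral_const_mul, intervalIntegral.integral_const_mul, integral_sin_pow_four,
    integral_sin_pow_four_mul_log_sin, smul_eq_mul] at h
  have hlog : Real.log (8 / 3) = 3 * Real.log 2 - Real.log 3 := by
    rw [Real.log_div (by norm_num) (by norm_num), show (8 : ℝ) = 2 ^ 3 by norm_num, Real.log_pow]
    norm_num
  rw [show (6 : ℝ) = 2 * 3 by norm_num, Real.log_mul (by norm_num) (by norm_num)]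
  rw [hlog] at h
  linear_combination (-2) * h

theorem measurable_exp_ofReal_mul_I : Measurable fun θ : ℝ => Complex.exp (θ * Complex.I) := by
  fun_prop

instance : IsProbabilityMeasure UNIF := by
  constructor
  rw [UNIF, Measure.smul_apply, Measure.map_apply measurable_exp_ofReal_mul_I MeasurableSet.univ]
  simp only [Set.preimage_univ, Measure.restrict_apply_univ, Real.volume_Ico, sub_zero,
    smul_eq_mul]
  exact ENNReal.inv_mul_cancel (by simp [Real.pi_pos]) ENNReal.ofReal_ne_top

theorem integral_UNIF {f : ℂ → ℝ} (hf : Measurable f) :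
    ∫ z, f z ∂UNIF = (2 * π)⁻¹ * ∫ θ in 0..2 * π, f (Complex.exp (θ * Complex.I)) := by
  rw [UNIF, MeasureTheory.integral_smul_measure,
    integral_map measurable_exp_ofReal_mul_I.aemeasurable hf.aestronglyMeasurable,
    integral_of_le Real.two_pi_pos.le, Measure.restrict_congr_set Ico_ae_eq_Ioc,
    ENNReal.toReal_inv, ENNReal.toReal_ofReal Real.two_pi_pos.le, smul_eq_mul]

theorem Function.Periodic.comp_arg_exp_mul_I {α : Type*} {g : ℝ → α}
    (hg : Function.Periodic g (2 * π)) (θ : ℝ) :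
    g (Complex.arg (Complex.exp (θ * Complex.I))) = g θ := by
  rw [arg_exp_mul_I, ← self_sub_toIocDiv_zsmul, hg.sub_zsmul_eq]

theorem integral_UNIF_comp_arg {g : ℝ → ℝ} (hg : Measurable g)
    (hg_periodic : Function.Periodic g (2 * π)) :
    ∫ z, g z.arg ∂UNIF = (2 * π)⁻¹ * ∫ θ in 0..2 * π, g θ := by
  simp_rw [integral_UNIF (f := fun z => g z.arg) (hg.comp measurable_arg),
    hg_periodic.comp_arg_exp_mul_I]

theorem Continuous.integrable_comp_arg {g : ℝ → ℝ} (hg : Continuous g) (μ : Measure ℂ)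
    [IsFiniteMeasure μ] : Integrable (fun z => g z.arg) μ := by
  obtain ⟨C, hC⟩ :=
    (isCompact_Icc (a := -π) (b := π)).exists_bound_of_continuousOn hg.continuousOn
  exact .of_bound (hg.measurable.comp measurable_arg).aestronglyMeasurable C
    (ae_of_all _ fun z => hC _ ⟨(neg_pi_lt_arg z).le, arg_le_pi z⟩)

theorem KL_withDensity_ofReal (μ : Measure ℂ) [SigmaFinite μ] {ρ : ℂ → ℝ} (hρ : Measurable ρ)
    (hρ_nonneg : ∀ z, 0 ≤ ρ z) (hint : Integrable (fun z => ρ z * Real.log (ρ z)) μ) :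
    KL (μ.withDensity fun z => ENNReal.ofReal (ρ z)) μ =
      ENNReal.ofReal (∫ z, ρ z * Real.log (ρ z) ∂μ) := by
  set ν := μ.withDensity fun z => ENNReal.ofReal (ρ z)
  have hρ' : Measurable fun z => ENNReal.ofReal (ρ z) := ENNReal.measurable_ofReal.comp hρ
  have hfin : ∀ᵐ z ∂μ, ENNReal.ofReal (ρ z) < ∞ := ae_of_all _ fun _ => ENNReal.ofReal_lt_top
  have hac : ν ≪ μ := withDensity_absolutelyContinuous _ _
  have hlog : (fun z => Real.log (ν.rnDeriv μ z).toReal) =ᵐ[ν] fun z => Real.log (ρ z) := by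
    filter_upwards [hac.ae_le (Measure.rnDeriv_withDensity μ hρ')] with z hz
    rw [hz, ENNReal.toReal_ofReal (hρ_nonneg z)]
  have hint' : Integrable (fun z => Real.log (ρ z)) ν := by
    rw [integrable_withDensity_iff hρ' hfin]
    simpa only [ENNReal.toReal_ofReal (hρ_nonneg _), mul_comm] using hint
  rw [KL, if_pos ⟨hac, hint'.congr hlog.symm⟩, integral_congr_ae hlog,
    integral_withDensity_eq_integral_toReal_smul hρ' hfin]
  simp only [ENNReal.toReal_ofReal (hρ_nonneg _), smul_eq_mul]

theorem mu20_one : mu20 1 = UNIF.withDensity fun z => ENNReal.ofReal (density20 z.arg) := by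
  norm_num [mu20, density20]

/-- 𝒦(μ^{2,0} | UNIF) = 7/3 − log 6. -/
theorem statement12 :
    KL (mu20 1) UNIF = ENNReal.ofReal (7 / 3 - Real.log 6) ∧
    (1 / (2 * Real.pi)) * ∫ θ in (0 : ℝ)..(2 * Real.pi),
        (1 - (4 / 3) * Real.cos θ + (1 / 3) * Real.cos (2 * θ)) *
          Real.log (1 - (4 / 3) * Real.cos θ + (1 / 3) * Real.cos (2 * θ)) =
      7 / 3 - Real.log 6 := by
  have hcirc : (1 / (2 * π)) * ∫ θ in 0..2 * π, density20 θ * Real.log (density20 θ) =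
      7 / 3 - Real.log 6 := by
    rw [integral_density20_mul_log]
    field_simp
  refine ⟨?_, hcirc⟩
  have hF : Continuous fun θ => density20 θ * Real.log (density20 θ) :=
    Real.continuous_mul_log.comp continuous_density20
  rw [mu20_one, KL_withDensity_ofReal UNIF (ρ := fun z => density20 z.arg)
      (continuous_density20.measurable.comp measurable_arg) (fun _ => density20_nonneg _)
      (hF.integrable_comp_arg UNIF),
    integral_UNIF_comp_arg hF.measurable (density20_periodic.comp fun y => y * Real.log y),
    ← hcirc, one_div]
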